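/- arXiv:2307.00757 — 2 statements merged into one kernel-verified Lean document; each statement's English description precedes it below -/
import Mathlib

section
/- Let X be a compact metric space and G the free semigroup generated by continuous maps {f_y}_{y∈Y}. If Z ⊆ X is G-invariant (i.e. f_y^{-1}(Z) = Z for all y ∈ Y), then for all finite words w⁽¹⁾ of length p, w⁽²⁾ of length q, any letter i ∈ Y, and any ε > 0: Λ_{w⁽¹⁾ i w⁽²⁾}(Z, p+q+1, ε) ≤ Λ_{w⁽¹⁾}(Z, p, ε) · Λ_{w⁽²⁾}(Z, q, ε), where Λ_w(Z, n, ε) is the minimal cardinality of a cover of Z by sets of the form X_w(U) = U_0 ∩ f_{i_1}^{-1}(U_1) ∩ ⋯ ∩ f_{i_n ⋯ i_1}^{-1}(U_n), with (U_0,…,U_n) a string of open sets of diameter < ε and w = i_1 ⋯ i_n. -/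
open Metric

variable {X Y : Type*}

/-- For a word `w = [i₁, …, i_k]`, `fw f w = f_{i₁} ∘ ⋯ ∘ f_{i_k}`. -/
def fw (f : Y → X → X) : List Y → X → X
  | [] => id
  | y :: w => fun x => f y (fw f w x)

/-- Bowen metric of the word `w = i₁ ⋯ i_n`:
`d_w(x,y) = max_{0 ≤ j ≤ n} d(f_{i_j ⋯ i_1} x, f_{i_j ⋯ i_1} y)`, i.e. the maximum of
`d(f_{w'} x, f_{w'} y)` over the words `w' ≤ w̄` (the reverses of initial segments of `w`). -/
noncomputable def dB [PseudoMetricSpace X] (f : Y → X → X) (w : List Y) (x y : X) : ℝ :=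
  ((w.inits.map fun u => dist (fw f u.reverse x) (fw f u.reverse y))).foldr max 0

/-- The `(w,ε)`-Bowen ball at `x`. -/
def BB [PseudoMetricSpace X] (f : Y → X → X) (w : List Y) (x : X) (ε : ℝ) : Set X :=
  {z | dB f w x z < ε}

/-- For a word `w = i₁ ⋯ i_n` and a string `U = (U₀, …, U_n)` of sets,
`X_w(U) = U₀ ∩ f_{i₁}⁻¹(U₁) ∩ ⋯ ∩ f_{i_n ⋯ i₁}⁻¹(U_n)`. -/
def strSet (f : Y → X → X) (w : List Y) (U : List (Set X)) : Set X :=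
  {x | ∀ j : Fin U.length, fw f ((w.take j).reverse) x ∈ U.get j}

/-- `Λ_w(Z, ε)`: minimal cardinality of a cover of `Z` by sets `X_w(U)` where `U` is a string
of `|w| + 1` open sets of diameter `< ε`. -/
noncomputable def Lam [MetricSpace X] (f : Y → X → X) (w : List Y) (Z : Set X) (ε : ℝ) : ℕ :=
  sInf {k : ℕ | ∃ C : Finset (List (Set X)), C.card = k ∧
    (∀ U ∈ C, U.length = w.length + 1 ∧ ∀ V ∈ U, IsOpen V ∧ Metric.diam V < ε) ∧
    Z ⊆ ⋃ U ∈ C, strSet f w U}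

/-!
Concatenating strings multiplies covers: since
`X_{w₁ i w₂}(U V) = X_{w₁}(U) ∩ f_{reverse(w₁ i)}⁻¹(X_{w₂}(V))`, a point `x ∈ Z` lies in the
concatenation of a string of a `w₁`-cover containing `x` and a string of a `w₂`-cover containing
`f_{reverse(w₁ i)} x`, which is again in `Z` by invariance. Compactness makes the infima
defining `Lam` finite, hence attained.
-/

def IsStringCover [PseudoMetricSpace X] (f : Y → X → X) (w : List Y) (Z : Set X) (ε : ℝ)
    (C : Finset (List (Set X))) : Prop :=
  (∀ U ∈ C, U.length = w.length + 1 ∧ ∀ V ∈ U, IsOpen V ∧ Metric.diam V < ε) ∧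
    Z ⊆ ⋃ U ∈ C, strSet f w U

lemma fw_append (f : Y → X → X) (u v : List Y) (x : X) :
    fw f (u ++ v) x = fw f u (fw f v x) := by
  induction u with
  | nil => rfl
  | cons a u ih => simp [fw, ih]

lemma mapsTo_fw {f : Y → X → X} {Z : Set X} (hZ : ∀ y, Set.MapsTo (f y) Z Z) (u : List Y) :
    Set.MapsTo (fw f u) Z Z := by
  induction u with
  | nil => exact Set.mapsTo_id Z
  | cons y u ih => exact (hZ y).comp ih

lemma strSet_singleton (f : Y → X → X) (w : List Y) (U₀ : Set X) : strSet f w [U₀] = U₀ := by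
  ext x
  simp [strSet, fw]

lemma strSet_cons_cons (f : Y → X → X) (i : Y) (w : List Y) (U₀ : Set X) (U : List (Set X)) :
    strSet f (i :: w) (U₀ :: U) = U₀ ∩ f i ⁻¹' strSet f w U := by
  ext x
  refine (Fin.forall_fin_succ (n := U.length)).trans ?_
  simp [strSet, fw_append, fw]

lemma strSet_append (f : Y → X → X) {w₁ : List Y} (i : Y) (w₂ : List Y) {U : List (Set X)}
    (hU : U.length = w₁.length + 1) (V : List (Set X)) :
    strSet f (w₁ ++ i :: w₂) (U ++ V) =
      strSet f w₁ U ∩ fw f (w₁ ++ [i]).reverse ⁻¹' strSet f w₂ V := by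
  induction w₁ generalizing U with
  | nil =>
    obtain ⟨U₀, rfl⟩ := List.length_eq_one_iff.1 hU
    simp [strSet_singleton, strSet_cons_cons, fw]
  | cons a w₁ ih =>
    obtain ⟨U₀, U, rfl⟩ := List.exists_cons_of_length_eq_add_one hU
    simp only [List.cons_append, strSet_cons_cons, ih (Nat.succ_inj.1 hU)]
    ext x
    simp [fw_append, fw, and_assoc]

lemma IsStringCover.append [PseudoMetricSpace X] [DecidableEq (Set X)] {f : Y → X → X}
    {Z : Set X} {ε : ℝ} {w₁ w₂ : List Y} {i : Y} {C₁ C₂ : Finset (List (Set X))}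
    (h₁ : IsStringCover f w₁ Z ε C₁) (h₂ : IsStringCover f w₂ Z ε C₂)
    (hZ : Set.MapsTo (fw f (w₁ ++ [i]).reverse) Z Z) :
    IsStringCover f (w₁ ++ i :: w₂) Z ε (Finset.image₂ (· ++ ·) C₁ C₂) := by
  constructor
  · simp only [Finset.mem_image₂]
    rintro _ ⟨U, hU, V, hV, rfl⟩
    obtain ⟨hU_len, hU_sets⟩ := h₁.1 U hU
    obtain ⟨hV_len, hV_sets⟩ := h₂.1 V hV
    refine ⟨by simp [hU_len, hV_len]; omega, fun A hA => ?_⟩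
    exact (List.mem_append.1 hA).elim (hU_sets A) (hV_sets A)
  · intro x hx
    obtain ⟨U, hU, hxU⟩ := Set.mem_iUnion₂.1 (h₁.2 hx)
    obtain ⟨V, hV, hxV⟩ := Set.mem_iUnion₂.1 (h₂.2 (hZ hx))
    refine Set.mem_iUnion₂.2 ⟨U ++ V, Finset.mem_image₂_of_mem hU hV, ?_⟩
    rw [strSet_append f i w₂ (h₁.1 U hU).1]
    exact ⟨hxU, hxV⟩

lemma exists_isStringCover [PseudoMetricSpace X] [CompactSpace X] (f : Y → X → X) (w : List Y)
    (Z : Set X) {ε : ℝ} (hε : 0 < ε) : ∃ C, IsStringCover f w Z ε C := by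
  classical
  obtain ⟨t, -, ht⟩ := isCompact_univ.elim_nhds_subcover (fun x : X => ball x (ε / 3))
    fun x _ => ball_mem_nhds x (by positivity)
  have hball : ∀ c : X, IsOpen (ball c (ε / 3)) ∧ diam (ball c (ε / 3)) < ε := fun c =>
    ⟨isOpen_ball, (diam_ball (by positivity)).trans_lt (by linarith)⟩
  let string : (Fin (w.length + 1) → t) → List (Set X) := fun g =>
    List.ofFn fun j => ball (g j : X) (ε / 3)
  refine ⟨Finset.univ.image string, ?_, fun x _ => ?_⟩
  · simp only [Finset.mem_image, Finset.mem_univ, true_and]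
    rintro _ ⟨g, rfl⟩
    exact ⟨List.length_ofFn, List.forall_mem_ofFn_iff.2 fun j => hball (g j)⟩
  · have hcenter : ∀ j : Fin (w.length + 1), ∃ c : t,
        fw f (w.take j).reverse x ∈ ball (c : X) (ε / 3) := fun j => by
      obtain ⟨c, hc, hmem⟩ := Set.mem_iUnion₂.1 (ht (Set.mem_univ (fw f (w.take j).reverse x)))
      exact ⟨⟨c, hc⟩, hmem⟩
    choose g hg using hcenter
    refine Set.mem_iUnion₂.2 ⟨string g, Finset.mem_image_of_mem _ (Finset.mem_univ g), fun j => ?_⟩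
    rw [List.get_ofFn]
    exact hg _

lemma Lam_le_card [MetricSpace X] {f : Y → X → X} {w : List Y} {Z : Set X} {ε : ℝ}
    {C : Finset (List (Set X))} (hC : IsStringCover f w Z ε C) : Lam f w Z ε ≤ C.card :=
  Nat.sInf_le ⟨C, rfl, hC⟩

lemma exists_isStringCover_card_eq_Lam [MetricSpace X] [CompactSpace X] (f : Y → X → X)
    (w : List Y) (Z : Set X) {ε : ℝ} (hε : 0 < ε) :
    ∃ C, IsStringCover f w Z ε C ∧ C.card = Lam f w Z ε := by
  obtain ⟨C, hC⟩ := exists_isStringCover f w Z hε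
  have hLam : Lam f w Z ε ∈ {k | ∃ C, C.card = k ∧ IsStringCover f w Z ε C} :=
    Nat.sInf_mem ⟨C.card, C, rfl, hC⟩
  obtain ⟨C, hC_card, hC⟩ := hLam
  exact ⟨C, hC, hC_card⟩

theorem Lam_concat_le_mul_general [MetricSpace X] [CompactSpace X] (f : Y → X → X)
    (Z : Set X) (hZinv : ∀ y : Y, f y ⁻¹' Z = Z)
    (w₁ w₂ : List Y) (i : Y) (ε : ℝ) (hε : 0 < ε) :
    Lam f (w₁ ++ i :: w₂) Z ε ≤ Lam f w₁ Z ε * Lam f w₂ Z ε := by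
  classical
  obtain ⟨C₁, hC₁, hC₁_card⟩ := exists_isStringCover_card_eq_Lam f w₁ Z hε
  obtain ⟨C₂, hC₂, hC₂_card⟩ := exists_isStringCover_card_eq_Lam f w₂ Z hε
  have hZ : Set.MapsTo (fw f (w₁ ++ [i]).reverse) Z Z :=
    mapsTo_fw (fun y => (hZinv y).ge) _
  calc Lam f (w₁ ++ i :: w₂) Z ε ≤ (Finset.image₂ (· ++ ·) C₁ C₂).card :=
        Lam_le_card (hC₁.append hC₂ hZ)
    _ ≤ C₁.card * C₂.card := Finset.card_image₂_le _ _ _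
    _ = Lam f w₁ Z ε * Lam f w₂ Z ε := by rw [hC₁_card, hC₂_card]

theorem Lam_concat_le_mul [MetricSpace X] [CompactSpace X] (f : Y → X → X)
    (hf : ∀ y, Continuous (f y)) (Z : Set X) (hZinv : ∀ y : Y, f y ⁻¹' Z = Z)
    (w₁ w₂ : List Y) (i : Y) (ε : ℝ) (hε : 0 < ε) :
    Lam f (w₁ ++ i :: w₂) Z ε ≤ Lam f w₁ Z ε * Lam f w₂ Z ε :=
  Lam_concat_le_mul_general f Z hZinv w₁ w₂ i ε hε
end

section
/- Let X, Y be compact metric spaces, {f_y}_{y∈Y} continuous self-maps of X, and F(ω,x) = (σω, f_{ω_1} x) the skew product on Y^ℕ × X with metric D((ω,x),(ω',x')) = max{d'(ω,ω'), d(x,x')}, d'(ω,ω') = Σ_j 2^{-j} d_Y(ω_j,ω'_j). Fix n ∈ ℕ, ε > 0, and m = ⌈log₂(diam Y / ε)⌉. If ω, ω' ∈ Y^ℕ agree in the first n + m coordinates and d_w(x, x') < ε for the word w = ω|_{[1,n]} (Bowen metric of the semigroup action), then D(F^i(ω,x), F^i(ω',x')) < 2ε for all 0 ≤ i ≤ n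 − 1. -/
open Metric

variable {X Y : Type*}

/-- The skew product `F(ω, x) = (σω, f_{ω₁}(x))` on `Y^ℕ × X`. -/
def skew (f : Y → X → X) : (ℕ → Y) × X → (ℕ → Y) × X :=
  fun p => (fun n => p.1 (n + 1), f (p.1 0) p.2)

/-- The metric `d'(ω, ω') = Σ_{j ≥ 1} 2^{-j} d_Y(ω_j, ω'_j)` on `Y^ℕ` (indexing from 0). -/
noncomputable def dseq [PseudoMetricSpace Y] (ω ω' : ℕ → Y) : ℝ :=
  ∑' j : ℕ, dist (ω j) (ω' j) / 2 ^ (j + 1)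

/-- The product metric `D = max{d', d}` on `Y^ℕ × X`. -/
noncomputable def Dprod [PseudoMetricSpace X] [PseudoMetricSpace Y]
    (p q : (ℕ → Y) × X) : ℝ :=
  max (dseq p.1 q.1) (dist p.2 q.2)

lemma le_foldr_max (l : List ℝ) (a : ℝ) (ha : a ∈ l) : a ≤ l.foldr max 0 := by
  induction l with
  | nil => simp at ha
  | cons b t ih =>
    rcases List.mem_cons.mp ha with h | h
    · simp [h]
    · exact le_trans (ih h) (le_max_right _ _)

lemma skew_iterate (f : Y → X → X) (ω : ℕ → Y) (x : X) (i : ℕ) :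
    (skew f)^[i] (ω, x) = (fun j => ω (j + i), fw f (((List.range i).map ω).reverse) x) := by
  induction i with
  | zero => simp [fw]
  | succ i ih =>
    rw [Function.iterate_succ_apply', ih]
    simp only [skew, List.range_succ, List.map_append, List.reverse_append, List.map_cons,
      List.map_nil, List.reverse_cons, List.reverse_nil, List.nil_append, List.cons_append, fw]
    refine Prod.ext (funext fun j => ?_) (by norm_num)
    simp only []
    ring_nf

lemma summable_aux [PseudoMetricSpace Y] [CompactSpace Y] (α β : ℕ → Y) :
    Summable (fun j : ℕ => dist (α j) (β j) / 2 ^ (j + 1)) := by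
  apply Summable.of_nonneg_of_le (f := fun j : ℕ =>
      (Metric.diam (Set.univ : Set Y) / 2) * (1/2)^j) (fun j => by positivity)
  · intro j
    have hd : dist (α j) (β j) ≤ Metric.diam (Set.univ : Set Y) :=
      Metric.dist_le_diam_of_mem isCompact_univ.isBounded (Set.mem_univ _) (Set.mem_univ _)
    have h2 : (0:ℝ) < 2 ^ (j+1) := by positivity
    calc dist (α j) (β j) / 2 ^ (j + 1) ≤ Metric.diam (Set.univ : Set Y) / 2 ^ (j+1) := by
          gcongr
      _ = (Metric.diam (Set.univ : Set Y) / 2) * (1/2)^j := by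
          rw [div_pow, one_pow, div_mul_div_comm, ← pow_succ', mul_one]
  · exact summable_geometric_two.mul_left _

set_option maxHeartbeats 1000000 in
lemma dseq_le_of_agree [PseudoMetricSpace Y] [CompactSpace Y] (m : ℕ) (α β : ℕ → Y)
    (h : ∀ j ≤ m, α j = β j) :
    dseq α β ≤ Metric.diam (Set.univ : Set Y) / 2 ^ (m + 1) := by
  set C := Metric.diam (Set.univ : Set Y) with hC
  have hC0 : 0 ≤ C := Metric.diam_nonneg
  have hsum := summable_aux α β
  have h1 : dseq α β = ∑' k : ℕ, dist (α (k + (m+1))) (β (k + (m+1))) / 2 ^ (k + (m+1) + 1) := by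
    rw [dseq, ← Summable.sum_add_tsum_nat_add (m+1) hsum]
    rw [Finset.sum_eq_zero, zero_add]
    intro j hj
    rw [h j (by simpa using Nat.lt_succ_iff.mp (Finset.mem_range.mp hj)), dist_self, zero_div]
  rw [h1]
  have h2 : ∀ k : ℕ, dist (α (k + (m+1))) (β (k + (m+1))) / 2 ^ (k + (m+1) + 1)
      ≤ (C / 2 ^ (m+2)) * (1/2)^k := by
    intro k
    have hd : dist (α (k+(m+1))) (β (k+(m+1))) ≤ C :=
      Metric.dist_le_diam_of_mem isCompact_univ.isBounded (Set.mem_univ _) (Set.mem_univ _)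
    have : (2:ℝ) ^ (k + (m+1) + 1) = 2 ^ (m+2) * 2 ^ k := by
      rw [← pow_add]; ring_nf
    rw [this]
    rw [div_mul_eq_div_div]
    calc dist (α (k+(m+1))) (β (k+(m+1))) / 2 ^ (m+2) / 2 ^ k
        ≤ C / 2 ^ (m+2) / 2 ^ k := by gcongr
      _ = (C / 2 ^ (m+2)) * (1/2)^k := by rw [div_pow, one_pow]; ring
  calc (∑' k : ℕ, dist (α (k + (m+1))) (β (k + (m+1))) / 2 ^ (k + (m+1) + 1))
      ≤ ∑' k : ℕ, (C / 2 ^ (m+2)) * (1/2)^k :=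
        Summable.tsum_le_tsum h2 ((summable_nat_add_iff (m+1)).2 hsum) (summable_geometric_two.mul_left _)
    _ = (C / 2 ^ (m+2)) * 2 := by rw [tsum_mul_left, tsum_geometric_two]
    _ = C / 2 ^ (m+1) := by rw [pow_succ]; ring

/-- If `ω, ω'` agree in the first `n + m` coordinates, with `m = ⌈log₂(diam Y / ε)⌉`, and
`d_w(x,x') < ε` for the word `w = ω|_{[1,n]}`, then the `F`-orbits of `(ω,x)` and `(ω',x')`
stay `2ε`-close for the metric `D` during the first `n` iterates. -/
theorem skew_orbits_close [MetricSpace X] [MetricSpace Y] [CompactSpace Y]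
    (f : Y → X → X) (n : ℕ) (ε : ℝ) (hε : 0 < ε) (m : ℕ)
    (hm : m = ⌈Real.logb 2 (Metric.diam (Set.univ : Set Y) / ε)⌉₊)
    (ω ω' : ℕ → Y) (x x' : X) (hagree : ∀ j < n + m, ω j = ω' j)
    (hd : dB f ((List.range n).map ω) x x' < ε) :
    ∀ i < n, Dprod ((skew f)^[i] (ω, x)) ((skew f)^[i] (ω', x')) < 2 * ε := by
  set C := Metric.diam (Set.univ : Set Y) with hC
  have hC0 : 0 ≤ C := Metric.diam_nonneg
  have hkey : C / 2 ^ (m+1) ≤ ε := by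
    rcases le_or_gt C ε with h | h
    · have h4 : (1:ℝ) ≤ 2 ^ (m+1) := by { apply one_le_pow₀; norm_num }
      calc C / 2 ^ (m+1) ≤ C := div_le_self hC0 h4
        _ ≤ ε := h
    · have h1 : 1 < C / ε := (one_lt_div hε).2 h
      have hlog : Real.logb 2 (C/ε) ≤ (m:ℝ) := by rw [hm]; exact Nat.le_ceil _
      have h2 : C/ε ≤ 2 ^ m := by
        have h3 : (2:ℝ) ^ (Real.logb 2 (C/ε)) ≤ (2:ℝ) ^ ((m:ℕ):ℝ) :=
          (Real.rpow_le_rpow_left_iff one_lt_two).mpr hlog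
        rwa [Real.rpow_logb (by norm_num) (by norm_num) (by positivity),
          Real.rpow_natCast] at h3
      rw [div_le_iff₀ hε] at h2
      calc C / 2 ^ (m+1) ≤ (2 ^ m * ε) / 2 ^ (m+1) := by gcongr
        _ = ε / 2 := by rw [pow_succ]; field_simp
        _ ≤ ε := by linarith
  intro i hi
  rw [skew_iterate, skew_iterate]
  simp only [Dprod]
  apply max_lt
  · have hagree' : ∀ j ≤ m, (fun j => ω (j + i)) j = (fun j => ω' (j + i)) j := by
      intro j hj
      exact hagree (j + i) (by omega)
    calc dseq (fun j => ω (j + i)) (fun j => ω' (j + i)) ≤ C / 2 ^ (m+1) :=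
          dseq_le_of_agree m _ _ hagree'
      _ ≤ ε := hkey
      _ < 2 * ε := by linarith
  · rw [show (List.range i).map ω' = (List.range i).map ω from
      List.map_congr_left fun a ha => (hagree a (by
        have := List.mem_range.mp ha; omega)).symm]
    have hpre : ((List.range i).map ω) <+: ((List.range n).map ω) := by
      have := List.take_prefix i (List.range n)
      rw [List.take_range, min_eq_left hi.le] at this
      exact this.map ω
    have hmem : dist (fw f (((List.range i).map ω).reverse) x)
        (fw f (((List.range i).map ω).reverse) x') ∈
        (((List.range n).map ω).inits.map fun u => dist (fw f u.reverse x) (fw f u.reverse x')) :=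
      List.mem_map.mpr ⟨(List.range i).map ω, (List.mem_inits _ _).mpr hpre, rfl⟩
    calc dist (fw f (((List.range i).map ω).reverse) x) (fw f (((List.range i).map ω).reverse) x')
        ≤ dB f ((List.range n).map ω) x x' := le_foldr_max _ _ hmem
      _ < ε := hd
      _ < 2 * ε := by linarith
end
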